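/- Let P be a real polynomial such that P(x) ≥ 0 for all x ≥ 0. Then there exist real polynomials P₁ and P₂ such that P(x) = P₁(x)² + x · P₂(x)² for all x ∈ ℝ. -/

import Mathlib

/-!
The polynomials of the form `a² + X b²` are closed under multiplication (they are the norms
from `R[√-X]`), and they contain the nonnegative constants, `X - r` for `r ≤ 0`, every square
`(X - r)²`, and every quadratic `X² - 2aX + s²` with `a ≤ s`, since it equals
`(X - s)² + 2(s - a) X`. A nonconstant `P ≥ 0` on `[0, ∞)` has a factor of one of these kinds:
a root `r ≤ 0` gives `X - r`, a root `r > 0` is a local minimum of `P`, hence a double root,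
and a non-real root `z` gives `X² - 2 Re z X + |z|²`. The cofactor is again nonnegative on
`[0, ∞)`, since the factor is positive there away from its finitely many roots, so induction on
the degree applies.
-/

open Polynomial Set

section CommRing

variable {R : Type*} [CommRing R]

def sqAddMulSq (t : R) : Submonoid R where
  carrier := {p | ∃ a b, p = a ^ 2 + t * b ^ 2}
  one_mem' := ⟨1, 0, by ring⟩
  mul_mem' := by
    rintro _ _ ⟨a, b, rfl⟩ ⟨c, d, rfl⟩
    exact ⟨a * c + t * b * d, a * d - b * c, by ring⟩

theorem sq_mem_sqAddMulSq (t a : R) : a ^ 2 ∈ sqAddMulSq t := ⟨a, 0, by ring⟩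

end CommRing

namespace Polynomial

theorem C_mem_sqAddMulSq_X {c : ℝ} (hc : 0 ≤ c) : C c ∈ sqAddMulSq (X : ℝ[X]) := by
  simpa [← C_pow, Real.sq_sqrt hc] using sq_mem_sqAddMulSq X (C √c)

theorem X_sub_C_mem_sqAddMulSq_X {r : ℝ} (hr : r ≤ 0) : X - C r ∈ sqAddMulSq (X : ℝ[X]) :=
  ⟨C √(-r), 1, by rw [← C_pow, Real.sq_sqrt (neg_nonneg.2 hr), C_neg]; ring⟩

theorem quadratic_mem_sqAddMulSq_X {a s : ℝ} (ha : a ≤ s) :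
    X ^ 2 - C (2 * a) * X + C (s ^ 2) ∈ sqAddMulSq (X : ℝ[X]) :=
  ⟨X - C s, C √(2 * (s - a)), by
    rw [← C_pow, Real.sq_sqrt (by linarith)]
    simp only [map_mul, map_sub, map_pow, map_ofNat]
    ring⟩

theorem eval_nonneg_of_mem_sqAddMulSq_X {f : ℝ[X]} (hf : f ∈ sqAddMulSq X) {x : ℝ}
    (hx : 0 ≤ x) : 0 ≤ f.eval x := by
  obtain ⟨a, b, rfl⟩ := hf
  simp only [eval_add, eval_mul, eval_pow, eval_X]
  positivity

theorem sq_X_sub_C_dvd_of_nonneg {P : ℝ[X]} (hP : ∀ x, 0 ≤ x → 0 ≤ P.eval x) {r : ℝ}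
    (hr : 0 < r) (hPr : P.IsRoot r) : (X - C r) ^ 2 ∣ P := by
  rcases eq_or_ne P 0 with rfl | hP0
  · exact dvd_zero _
  have hmin : IsLocalMin (fun x => P.eval x) r := by
    filter_upwards [Ioi_mem_nhds hr] with x hx
    simpa [hPr.eq_zero] using hP x hx.le
  have hderiv : P.derivative.IsRoot r := by
    simpa only [IsRoot, Polynomial.deriv] using hmin.deriv_eq_zero
  have hmult : 2 ≤ P.rootMultiplicity r :=
    (one_lt_rootMultiplicity_iff_isRoot hP0).2 ⟨hPr, hderiv⟩
  exact (pow_dvd_pow _ hmult).trans (pow_rootMultiplicity_dvd P r)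

theorem exists_mem_sqAddMulSq_X_dvd_of_nonneg {P : ℝ[X]} (hP : ∀ x, 0 ≤ x → 0 ≤ P.eval x)
    (hdeg : 0 < P.natDegree) : ∃ f ∈ sqAddMulSq X, 0 < f.natDegree ∧ f ∣ P := by
  obtain ⟨z, hz⟩ : ∃ z : ℂ, aeval z P = 0 :=
    IsAlgClosed.exists_aeval_eq_zero ℂ P (natDegree_pos_iff_degree_pos.1 hdeg).ne'
  rcases eq_or_ne z.im 0 with him | him
  · obtain ⟨r, rfl⟩ : ∃ r : ℝ, (r : ℂ) = z := ⟨z.re, Complex.ext rfl (by simp [him])⟩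
    have hPr : P.IsRoot r := by
      rwa [← Complex.coe_algebraMap, aeval_algebraMap_apply, Complex.coe_algebraMap,
        Complex.ofReal_eq_zero] at hz
    rcases le_or_gt r 0 with hr | hr
    · exact ⟨_, X_sub_C_mem_sqAddMulSq_X hr, by simp, dvd_iff_isRoot.2 hPr⟩
    · exact ⟨_, sq_mem_sqAddMulSq X _, by simp, sq_X_sub_C_dvd_of_nonneg hP hr hPr⟩
  · have hdeg : (X ^ 2 - C (2 * z.re) * X + C (‖z‖ ^ 2)).natDegree = 2 := by compute_degree!
    exact ⟨_, quadratic_mem_sqAddMulSq_X (Complex.re_le_norm z), by omega,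
      P.quadratic_dvd_of_aeval_eq_zero_im_ne_zero hz him⟩

theorem eval_nonneg_of_eval_ne_zero {f Q : ℝ[X]} (hf0 : f ≠ 0)
    (h : ∀ x, 0 ≤ x → f.eval x ≠ 0 → 0 ≤ Q.eval x) {x : ℝ} (hx : 0 ≤ x) :
    0 ≤ Q.eval x := by
  have hdense : Dense {y | f.eval y ≠ 0} :=
    (finite_setOfPred_isRoot hf0).countable.dense_compl ℝ
  have hT : Ici 0 ⊆ closure (Ioi 0 ∩ {y | f.eval y ≠ 0}) := by
    rw [← closure_Ioi]
    exact closure_minimal (hdense.open_subset_closure_inter isOpen_Ioi) isClosed_closure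
  have hclosed : IsClosed {y | 0 ≤ Q.eval y} := isClosed_le continuous_const Q.continuous
  exact hclosed.closure_subset_iff.2 (fun y hy => h y hy.1.le hy.2) (hT hx)

theorem eval_nonneg_of_mul_of_mem_sqAddMulSq_X {f Q : ℝ[X]} (hf : f ∈ sqAddMulSq X)
    (hf0 : f ≠ 0) (h : ∀ x, 0 ≤ x → 0 ≤ (f * Q).eval x) {x : ℝ} (hx : 0 ≤ x) :
    0 ≤ Q.eval x := by
  refine eval_nonneg_of_eval_ne_zero hf0 (fun y hy hfy => ?_) hx
  have hfy_pos : 0 < f.eval y := (eval_nonneg_of_mem_sqAddMulSq_X hf hy).lt_of_ne' hfy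
  exact nonneg_of_mul_nonneg_right (eval_mul (p := f) ▸ h y hy) hfy_pos

theorem mem_sqAddMulSq_X_of_nonneg {P : ℝ[X]} (hP : ∀ x, 0 ≤ x → 0 ≤ P.eval x) :
    P ∈ sqAddMulSq X := by
  induction hn : P.natDegree using Nat.strong_induction_on generalizing P with
  | _ n ih =>
  rcases Nat.eq_zero_or_pos n with rfl | hpos
  · rw [eq_C_of_natDegree_eq_zero hn]
    exact C_mem_sqAddMulSq_X (coeff_zero_eq_eval_zero P ▸ hP 0 le_rfl)
  obtain ⟨f, hf, hfdeg, Q, rfl⟩ := exists_mem_sqAddMulSq_X_dvd_of_nonneg hP (hn ▸ hpos)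
  have hfQ : f * Q ≠ 0 := by
    rintro h
    rw [h, natDegree_zero] at hn
    omega
  have hf0 := left_ne_zero_of_mul hfQ
  have hdeg : Q.natDegree < n := by
    rw [← hn, natDegree_mul hf0 (right_ne_zero_of_mul hfQ)]
    omega
  exact mul_mem hf
    (ih _ hdeg (fun x hx => eval_nonneg_of_mul_of_mem_sqAddMulSq_X hf hf0 hP hx) rfl)

end Polynomial

/-- A real polynomial nonnegative on `[0, ∞)` can be written as `P₁² + X · P₂²`. -/
theorem stmt_6 (P : Polynomial ℝ) (hP : ∀ x : ℝ, 0 ≤ x → 0 ≤ P.eval x) :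
    ∃ P₁ P₂ : Polynomial ℝ, ∀ x : ℝ,
      P.eval x = (P₁.eval x) ^ 2 + x * (P₂.eval x) ^ 2 := by
  obtain ⟨A, B, hAB⟩ := mem_sqAddMulSq_X_of_nonneg hP
  exact ⟨A, B, fun x => by simp [hAB]⟩
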